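/- arXiv:2404.01559 — 3 statements merged into one kernel-verified Lean document; each statement's English description precedes it below -/
import Mathlib

section
/- Fix a positive integer m, and call an affine subspace W of ℝ^m rational if W equals the affine span over ℝ of a set of points of ℚ^m (i.e., of points of ℝ^m all of whose coordinates are rational). Let W₁ and W₂ be rational affine subspaces of ℝ^m with W₁ ∩ W₂ nonempty. Then W₁ ∩ W₂ is a rational affine subspace of ℝ^m; in particular, W₁ ∩ W₂ contains a point of ℚ^m and equals the affine span over ℝ of its points lying in ℚ^m. -/
/-! For a field extension `L / K` and a `K`-subspace `E ⊆ K^ι`, write `E_L` for its `L`-span in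
`L^ι`. A `K`-linear functional `π : L → K` applied coordinatewise maps `E_L` into `E`, and expanding
the coordinates of `v ∈ L^ι` in a `K`-basis of `L` shows that `v ∈ E_L` as soon as all these images
lie in `E`. Hence `(E₁ ⊓ E₂)_L = E₁_L ⊓ E₂_L` and `E_L ∩ K^ι = E`.

A rational affine subspace has a rational point and a direction of the form `E_L`. For rational
points `p₁ ∈ W₁`, `p₂ ∈ W₂` of intersecting subspaces, `p₁ - p₂ ∈ (E₁ ⊔ E₂)_L ∩ K^ι = E₁ ⊔ E₂`;
splitting it as `u₁ + u₂` gives the common rational point `p₁ - u₁ = p₂ + u₂`. The intersection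
then has direction `(E₁ ⊓ E₂)_L`, so it is the affine span of its rational points. -/

open Submodule

section

variable (K L ι : Type*) [Field K] [Field L] [Algebra K L]

abbrev algebraMapPi : (ι → K) →ₗ[K] ι → L := (Algebra.linearMap K L).compLeft ι

variable {K L ι}

theorem compLeft_mem_of_mem_span_image {E : Submodule K (ι → K)} {v : ι → L}
    (hv : v ∈ span L (algebraMapPi K L ι '' E)) (π : L →ₗ[K] K) : π.compLeft ι v ∈ E := by
  induction hv using span_induction generalizing π with
  | mem _ h =>
    obtain ⟨e, he, rfl⟩ := h
    convert E.smul_mem (π 1) he using 1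
    ext i
    simp [Algebra.algebraMap_eq_smul_one, mul_comm]
  | zero => simp
  | add _ _ _ _ h₁ h₂ => simpa using E.add_mem (h₁ π) (h₂ π)
  | smul c v _ h =>
    -- this is why `π` is generalized: `π ∘ (c * ·)` is another `K`-linear functional
    convert h (π ∘ₗ LinearMap.mulLeft K c) using 1
    ext i
    simp

theorem mem_span_image_of_forall_compLeft_mem [Finite ι] {E : Submodule K (ι → K)} {v : ι → L}
    (hv : ∀ π : L →ₗ[K] K, π.compLeft ι v ∈ E) : v ∈ span L (algebraMapPi K L ι '' E) := by
  have := Fintype.ofFinite ι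
  let b := Module.Basis.ofVectorSpace K L
  classical
  let s := Finset.univ.biUnion fun i => (b.repr (v i)).support
  have hdecomp : v = ∑ j ∈ s, b j • algebraMapPi K L ι ((b.coord j).compLeft ι v) := by
    ext i
    have hsupp : b.repr (v i) ∈ Finsupp.supported K K (s : Set _) :=
      (Finsupp.mem_supported K _).2 <|
        Finset.coe_subset.2 <|
          Finset.subset_biUnion_of_mem (fun i => (b.repr (v i)).support) (Finset.mem_univ i)
    rw [← b.linearCombination_repr (v i), Finsupp.linearCombination_apply_of_mem_supported K hsupp]
    simp [Algebra.smul_def, mul_comm]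
  rw [hdecomp]
  exact sum_mem fun j _ => smul_mem _ _ (subset_span ⟨_, hv (b.coord j), rfl⟩)

theorem mem_span_image_iff [Finite ι] {E : Submodule K (ι → K)} {v : ι → L} :
    v ∈ span L (algebraMapPi K L ι '' E) ↔ ∀ π : L →ₗ[K] K, π.compLeft ι v ∈ E :=
  ⟨compLeft_mem_of_mem_span_image, mem_span_image_of_forall_compLeft_mem⟩

theorem span_image_inf [Finite ι] (E₁ E₂ : Submodule K (ι → K)) :
    span L (algebraMapPi K L ι '' ↑(E₁ ⊓ E₂)) =
      span L (algebraMapPi K L ι '' E₁) ⊓ span L (algebraMapPi K L ι '' E₂) := by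
  ext v
  simp only [mem_inf, mem_span_image_iff, forall_and]

theorem mem_of_algebraMapPi_mem_span_image {E : Submodule K (ι → K)} {w : ι → K}
    (hw : algebraMapPi K L ι w ∈ span L (algebraMapPi K L ι '' E)) : w ∈ E := by
  obtain ⟨π, hπ⟩ := (Algebra.linearMap K L).exists_leftInverse_of_injective
    (LinearMap.ker_eq_bot.2 (FaithfulSMul.algebraMap_injective K L))
  convert compLeft_mem_of_mem_span_image hw π
  ext i
  exact (LinearMap.congr_fun hπ (w i)).symm

theorem span_image_span (X : Set (ι → K)) :
    span L (algebraMapPi K L ι '' span K X) = span L (algebraMapPi K L ι '' X) := by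
  rw [← map_coe, map_span, span_span_of_tower]

theorem span_image_sup (E₁ E₂ : Submodule K (ι → K)) :
    span L (algebraMapPi K L ι '' ↑(E₁ ⊔ E₂)) =
      span L (algebraMapPi K L ι '' E₁) ⊔ span L (algebraMapPi K L ι '' E₂) := by
  rw [← span_eq E₁, ← span_eq E₂, ← span_union, span_image_span, Set.image_union, span_union,
    span_eq, span_eq]

theorem exists_span_image_eq_span {T : Set (ι → L)} (hT : T ⊆ Set.range (algebraMapPi K L ι)) :
    ∃ E : Submodule K (ι → K), span L (algebraMapPi K L ι '' E) = span L T :=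
  ⟨span K (algebraMapPi K L ι ⁻¹' T), by
    rw [span_image_span, Set.image_preimage_eq_of_subset hT]⟩

open AffineSubspace

theorem exists_span_image_eq_direction_affineSpan {S : Set (ι → L)}
    (hS : S ⊆ Set.range (algebraMapPi K L ι)) :
    ∃ E : Submodule K (ι → K), span L (algebraMapPi K L ι '' E) = (affineSpan L S).direction := by
  rw [direction_affineSpan, vectorSpan_def]
  refine exists_span_image_eq_span ?_
  rintro _ ⟨_, hx, _, hy, rfl⟩
  obtain ⟨a, rfl⟩ := hS hx
  obtain ⟨b, rfl⟩ := hS hy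
  exact ⟨a - b, map_sub _ a b⟩

theorem exists_algebraMapPi_mem_affineSpan {S : Set (ι → L)}
    (hS : S ⊆ Set.range (algebraMapPi K L ι)) (hne : (affineSpan L S : Set (ι → L)).Nonempty) :
    ∃ p, algebraMapPi K L ι p ∈ affineSpan L S := by
  obtain ⟨_, hx⟩ := (affineSpan_nonempty L).1 hne
  obtain ⟨p, rfl⟩ := hS hx
  exact ⟨p, subset_affineSpan L S hx⟩

theorem exists_algebraMapPi_mem_inf {W₁ W₂ : AffineSubspace L (ι → L)}
    {E₁ E₂ : Submodule K (ι → K)} (hE₁ : span L (algebraMapPi K L ι '' E₁) = W₁.direction)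
    (hE₂ : span L (algebraMapPi K L ι '' E₂) = W₂.direction) {p₁ p₂ : ι → K}
    (hp₁ : algebraMapPi K L ι p₁ ∈ W₁) (hp₂ : algebraMapPi K L ι p₂ ∈ W₂) {p : ι → L}
    (hpW₁ : p ∈ W₁) (hpW₂ : p ∈ W₂) :
    ∃ x, algebraMapPi K L ι x ∈ W₁ ⊓ W₂ := by
  set f := algebraMapPi K L ι
  have hsup : f (p₁ - p₂) ∈ span L (f '' ↑(E₁ ⊔ E₂)) := by
    rw [span_image_sup, hE₁, hE₂, map_sub, ← sub_add_sub_cancel _ p]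
    exact add_mem_sup (vsub_mem_direction hp₁ hpW₁) (vsub_mem_direction hpW₂ hp₂)
  obtain ⟨u₁, hu₁, u₂, hu₂, hu⟩ := mem_sup.1 (mem_of_algebraMapPi_mem_span_image hsup)
  refine ⟨p₁ - u₁, ?_, ?_⟩
  · have : f (-u₁) ∈ W₁.direction := hE₁ ▸ subset_span ⟨-u₁, E₁.neg_mem hu₁, rfl⟩
    simpa [sub_eq_neg_add] using vadd_mem_of_mem_direction this hp₁
  · have : f u₂ ∈ W₂.direction := hE₂ ▸ subset_span ⟨u₂, hu₂, rfl⟩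
    rw [show p₁ - u₁ = u₂ + p₂ by linear_combination -hu]
    simpa using vadd_mem_of_mem_direction this hp₂

theorem eq_affineSpan_inter_range {W : AffineSubspace L (ι → L)} {E : Submodule K (ι → K)}
    (hE : span L (algebraMapPi K L ι '' E) = W.direction) {p : ι → K}
    (hp : algebraMapPi K L ι p ∈ W) :
    W = affineSpan L (W ∩ Set.range (algebraMapPi K L ι)) := by
  set f := algebraMapPi K L ι
  have hle : affineSpan L (W ∩ Set.range f) ≤ W := affineSpan_le.2 Set.inter_subset_left
  refine (eq_of_direction_eq_of_nonempty_of_le (le_antisymm (direction_le hle) ?_)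
    ⟨f p, subset_affineSpan L _ ⟨hp, p, rfl⟩⟩ hle).symm
  rw [← hE, span_le, direction_affineSpan]
  rintro _ ⟨e, he, rfl⟩
  have hep : f (e + p) ∈ W := by
    simpa using vadd_mem_of_mem_direction (hE ▸ subset_span ⟨e, he, rfl⟩) hp
  simpa using vsub_mem_vectorSpan L (s := (W : Set (ι → L)) ∩ Set.range f)
    ⟨hep, e + p, rfl⟩ ⟨hp, p, rfl⟩

theorem inf_affineSpan_eq_affineSpan_inter_range [Finite ι] {S₁ S₂ : Set (ι → L)}
    (hS₁ : S₁ ⊆ Set.range (algebraMapPi K L ι)) (hS₂ : S₂ ⊆ Set.range (algebraMapPi K L ι))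
    (hne : ((affineSpan L S₁ : Set (ι → L)) ∩ affineSpan L S₂).Nonempty) :
    (∃ x, algebraMapPi K L ι x ∈ affineSpan L S₁ ⊓ affineSpan L S₂) ∧
      affineSpan L S₁ ⊓ affineSpan L S₂ =
        affineSpan L (↑(affineSpan L S₁ ⊓ affineSpan L S₂) ∩ Set.range (algebraMapPi K L ι)) := by
  obtain ⟨p, hpS₁, hpS₂⟩ := hne
  obtain ⟨E₁, hE₁⟩ := exists_span_image_eq_direction_affineSpan hS₁
  obtain ⟨E₂, hE₂⟩ := exists_span_image_eq_direction_affineSpan hS₂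
  obtain ⟨p₁, hp₁⟩ := exists_algebraMapPi_mem_affineSpan hS₁ ⟨p, hpS₁⟩
  obtain ⟨p₂, hp₂⟩ := exists_algebraMapPi_mem_affineSpan hS₂ ⟨p, hpS₂⟩
  obtain ⟨x, hx⟩ := exists_algebraMapPi_mem_inf hE₁ hE₂ hp₁ hp₂ hpS₁ hpS₂
  have hE : span L (algebraMapPi K L ι '' ↑(E₁ ⊓ E₂)) =
      (affineSpan L S₁ ⊓ affineSpan L S₂).direction := by
    rw [span_image_inf, hE₁, hE₂, direction_inf_of_mem hx.1 hx.2]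
  exact ⟨⟨x, hx⟩, eq_affineSpan_inter_range hE hx⟩

end

theorem mem_range_algebraMapPi_rat_iff {ι : Type*} {x : ι → ℝ} :
    x ∈ Set.range (algebraMapPi ℚ ℝ ι) ↔ ∀ i, ∃ q : ℚ, x i = q := by
  refine ⟨?_, fun h => ?_⟩
  · rintro ⟨q, rfl⟩ i
    exact ⟨q i, rfl⟩
  · choose q hq using h
    exact ⟨q, funext fun i => (hq i).symm⟩

/-- An affine subspace `W` of `ℝ^m` is rational if it is the affine span over `ℝ` of a set of
points all of whose coordinates are rational. -/
def IsRationalAffine (m : ℕ) (W : AffineSubspace ℝ (Fin m → ℝ)) : Prop :=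
  ∃ S : Set (Fin m → ℝ), (∀ x ∈ S, ∀ i, ∃ q : ℚ, x i = (q : ℝ)) ∧ W = affineSpan ℝ S

theorem stmt_4_general (m : ℕ) (W₁ W₂ : AffineSubspace ℝ (Fin m → ℝ))
    (h₁ : IsRationalAffine m W₁) (h₂ : IsRationalAffine m W₂)
    (hne : ((W₁ : Set (Fin m → ℝ)) ∩ (W₂ : Set (Fin m → ℝ))).Nonempty) :
    IsRationalAffine m (W₁ ⊓ W₂) ∧
    (∃ x, x ∈ W₁ ⊓ W₂ ∧ ∀ i, ∃ q : ℚ, x i = (q : ℝ)) ∧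
    W₁ ⊓ W₂ = affineSpan ℝ {x | x ∈ W₁ ⊓ W₂ ∧ ∀ i, ∃ q : ℚ, x i = (q : ℝ)} := by
  obtain ⟨S₁, hS₁, rfl⟩ := h₁
  obtain ⟨S₂, hS₂, rfl⟩ := h₂
  simp_rw [← mem_range_algebraMapPi_rat_iff] at hS₁ hS₂ ⊢
  obtain ⟨⟨x, hx⟩, hW⟩ := inf_affineSpan_eq_affineSpan_inter_range hS₁ hS₂ hne
  exact ⟨⟨_, fun _ hy => mem_range_algebraMapPi_rat_iff.1 hy.2, hW⟩, ⟨_, hx, x, rfl⟩, hW⟩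

/-- If two rational affine subspaces of `ℝ^m` have a common (real) point, their intersection is
again a rational affine subspace; in particular it contains a rational point and is the affine
span over `ℝ` of its rational points. -/
theorem stmt_4 (m : ℕ) (hm : 0 < m) (W₁ W₂ : AffineSubspace ℝ (Fin m → ℝ))
    (h₁ : IsRationalAffine m W₁) (h₂ : IsRationalAffine m W₂)
    (hne : ((W₁ : Set (Fin m → ℝ)) ∩ (W₂ : Set (Fin m → ℝ))).Nonempty) :
    IsRationalAffine m (W₁ ⊓ W₂) ∧
    (∃ x, x ∈ W₁ ⊓ W₂ ∧ ∀ i, ∃ q : ℚ, x i = (q : ℝ)) ∧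
    W₁ ⊓ W₂ = affineSpan ℝ {x | x ∈ W₁ ⊓ W₂ ∧ ∀ i, ∃ q : ℚ, x i = (q : ℝ)} :=
  stmt_4_general m W₁ W₂ h₁ h₂ hne
end

section
/- Fix integers m ≥ 1 and n ≥ 0. Call an affine subspace W of ℝ^m rational if W equals the affine span over ℝ of a set of points of ℚ^m. Let v_1, …, v_{n+1} ∈ ℚ^m be affinely independent points (viewed in ℝ^m), let b_1, …, b_{n+1} be positive real numbers with ∑_{i=1}^{n+1} b_i = 1, and set v₀ := ∑_{i=1}^{n+1} b_i v_i. Assume that v₀ is not contained in any rational affine subspace of ℝ^m of dimension strictly less than n. Then the real numbers b_1, …, b_{n+1} are linearly independent over ℚ; that is, the only rational numbers q_1, …, q_{n+1} with q_1 b_1 + ⋯ + q_{n+1} b_{n+1} = 0 are q_1 = ⋯ = q_{n+1} = 0. -/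
open Finset Submodule

section Pivot

variable {R M ι : Type*} [CommRing R] [AddCommGroup M] [Module R M]

def pivotCombination (q : ι → R) (v : ι → M) (i j k : ι) : M :=
  (q i - q j) • v k + (q j - q k) • v i + (q k - q i) • v j

theorem pivotCombination_left (q : ι → R) (v : ι → M) (i j : ι) :
    pivotCombination q v i j i = 0 := by
  simp [pivotCombination, ← add_smul]

theorem pivotCombination_right (q : ι → R) (v : ι → M) (i j : ι) :
    pivotCombination q v i j j = 0 := by
  simp [pivotCombination, ← add_smul]

variable [Fintype ι]

theorem sub_smul_sum_smul_eq {b q : ι → R} (hb : ∑ k, b k = 1) (hq : ∑ k, q k * b k = 0)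
    (v : ι → M) (i j : ι) :
    (q i - q j) • ∑ k, b k • v k =
      (q i • v j - q j • v i) + ∑ k, b k • pivotCombination q v i j k := by
  have hbi : ∑ k, b k * (q j - q k) = q j := calc
    _ = q j * ∑ k, b k - ∑ k, q k * b k := by
      rw [mul_sum, ← sum_sub_distrib]; exact sum_congr rfl fun k _ => by ring
    _ = q j := by rw [hb, hq]; ring
  have hbj : ∑ k, b k * (q k - q i) = -q i := calc
    _ = ∑ k, q k * b k - q i * ∑ k, b k := by
      rw [mul_sum, ← sum_sub_distrib]; exact sum_congr rfl fun k _ => by ring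
    _ = -q i := by rw [hb, hq]; ring
  simp only [pivotCombination, smul_add, sum_add_distrib, smul_smul, ← sum_smul, smul_sum,
    hbi, hbj, mul_comm (q i - q j)]
  module

end Pivot

theorem sum_smul_mem_mk'_span_pivotCombination {K M ι : Type*} [Field K] [AddCommGroup M]
    [Module K M] [Fintype ι] {b q : ι → K} (hb : ∑ k, b k = 1) (hq : ∑ k, q k * b k = 0)
    (v : ι → M) {i j : ι} (hij : q i ≠ q j) :
    ∑ k, b k • v k ∈ AffineSubspace.mk' ((q i - q j)⁻¹ • (q i • v j - q j • v i))
      (span K (Set.range (pivotCombination q v i j))) := by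
  have hd : q i - q j ≠ 0 := sub_ne_zero.mpr hij
  rw [AffineSubspace.mem_mk', vsub_eq_sub, ← inv_smul_smul₀ hd (∑ k, b k • v k),
    sub_smul_sum_smul_eq hb hq v i j, smul_add, add_sub_cancel_left]
  exact smul_mem _ _ <| sum_mem fun k _ => smul_mem _ _ <| subset_span ⟨k, rfl⟩

theorem finrank_span_range_add_two_le {K M ι : Type*} [DivisionRing K] [AddCommGroup M]
    [Module K M] [Fintype ι] {f : ι → M} {i j : ι} (hij : i ≠ j) (hi : f i = 0) (hj : f j = 0) :
    Module.finrank K (span K (Set.range f)) + 2 ≤ Fintype.card ι := by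
  classical
  set s := (univ.erase i).erase j
  have hrange : Set.range f ⊆ insert 0 (s.image f : Set M) := by
    rintro _ ⟨k, rfl⟩
    by_cases hk : k = i ∨ k = j
    · rcases hk with rfl | rfl <;> simp [hi, hj]
    · push Not at hk
      exact Set.mem_insert_of_mem _ (mem_coe.mpr (mem_image_of_mem f (by simp [s, hk.1, hk.2])))
  have hcard : #s + 2 = Fintype.card ι := by
    rw [← card_univ, ← card_erase_add_one (mem_univ i), ← card_erase_add_one (s := univ.erase i)
      (mem_erase.mpr ⟨hij.symm, mem_univ j⟩)]
  calc Module.finrank K (span K (Set.range f)) + 2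
      ≤ Module.finrank K (span K (s.image f : Set M)) + 2 := by
        gcongr
        exact Submodule.finrank_mono ((span_mono hrange).trans_eq (span_insert_zero ..))
      _ ≤ #s + 2 := by gcongr; exact (finrank_span_finset_le_card _).trans card_image_le
      _ = Fintype.card ι := hcard

section Rational

variable {ι : Type*}

def IsRationalPoint (x : ι → ℝ) : Prop := ∀ t, ∃ q : ℚ, x t = q

theorem IsRationalPoint.add {x y : ι → ℝ} (hx : IsRationalPoint x) (hy : IsRationalPoint y) :
    IsRationalPoint (x + y) := fun t => by
  obtain ⟨a, ha⟩ := hx t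
  obtain ⟨b, hb⟩ := hy t
  exact ⟨a + b, by simp [ha, hb]⟩

theorem IsRationalPoint.sub {x y : ι → ℝ} (hx : IsRationalPoint x) (hy : IsRationalPoint y) :
    IsRationalPoint (x - y) := fun t => by
  obtain ⟨a, ha⟩ := hx t
  obtain ⟨b, hb⟩ := hy t
  exact ⟨a - b, by simp [ha, hb]⟩

theorem IsRationalPoint.ratCast_smul {x : ι → ℝ} (hx : IsRationalPoint x) (c : ℚ) :
    IsRationalPoint ((c : ℝ) • x) := fun t => by
  obtain ⟨a, ha⟩ := hx t
  exact ⟨c * a, by simp [ha]⟩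

theorem IsRationalPoint.pivotCombination {κ : Type*} {v : κ → ι → ℝ}
    (hv : ∀ k, IsRationalPoint (v k)) (q : κ → ℚ) (i j k : κ) :
    IsRationalPoint (pivotCombination (fun k => (q k : ℝ)) v i j k) := by
  simp only [_root_.pivotCombination, ← Rat.cast_sub]
  exact (((hv k).ratCast_smul _).add ((hv i).ratCast_smul _)).add ((hv j).ratCast_smul _)

end Rational

theorem isRationalAffine_mk'_span {m : ℕ} {κ : Type*} {P : Fin m → ℝ} {U : κ → Fin m → ℝ}
    (hP : IsRationalPoint P) (hU : ∀ k, IsRationalPoint (U k)) :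
    IsRationalAffine m (AffineSubspace.mk' P (span ℝ (Set.range U))) := by
  set S := insert P (Set.range fun k => P + U k)
  refine ⟨S, ?_, ?_⟩
  · rintro x (rfl | ⟨k, rfl⟩)
    exacts [hP, hP.add (hU k)]
  · have hPS : P ∈ S := Set.mem_insert _ _
    rw [← AffineSubspace.mk'_eq (subset_affineSpan ℝ S hPS), direction_affineSpan,
      vectorSpan_eq_span_vsub_set_right ℝ hPS, Set.image_insert_eq, vsub_self, span_insert_zero,
      ← Set.range_comp]
    congr 3
    ext k
    simp

theorem stmt_6_general (m n : ℕ)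
    (v : Fin (n + 1) → (Fin m → ℝ))
    (hvQ : ∀ i j, ∃ q : ℚ, v i j = (q : ℝ))
    (b : Fin (n + 1) → ℝ) (hbsum : ∑ i, b i = 1)
    (v₀ : Fin m → ℝ) (hv₀ : v₀ = ∑ i, b i • v i)
    (hmin : ∀ W : AffineSubspace ℝ (Fin m → ℝ), IsRationalAffine m W → v₀ ∈ W →
      n ≤ Module.finrank ℝ W.direction) :
    ∀ q : Fin (n + 1) → ℚ, ∑ i, (q i : ℝ) * b i = 0 → ∀ i, q i = 0 := by
  intro q hq
  have hv : ∀ k, IsRationalPoint (v k) := hvQ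
  have hconst : ∀ i j, q i = q j := by
    intro i j
    by_contra hij
    have hijR : (q i : ℝ) ≠ q j := by exact_mod_cast hij
    have hrat := isRationalAffine_mk'_span
      ((((hv j).ratCast_smul (q i)).sub ((hv i).ratCast_smul (q j))).ratCast_smul (q i - q j)⁻¹)
      (IsRationalPoint.pivotCombination hv q i j)
    push_cast at hrat
    have hdim := hmin _ hrat (hv₀ ▸ sum_smul_mem_mk'_span_pivotCombination hbsum hq v hijR)
    have hle := finrank_span_range_add_two_le (K := ℝ) (ne_of_apply_ne q hij)
      (pivotCombination_left (fun k => (q k : ℝ)) v i j) (pivotCombination_right _ v i j)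
    rw [AffineSubspace.direction_mk'] at hdim
    rw [Fintype.card_fin] at hle
    omega
  intro i
  have hqi : ∑ k, (q k : ℝ) * b k = q i := by simp only [hconst _ i, ← mul_sum, hbsum, mul_one]
  exact_mod_cast hqi ▸ hq

/-- If `v₀` is a positive convex combination `∑ b i • v i` of affinely independent rational
points `v 0, …, v n` of `ℝ^m` and `v₀` lies in no rational affine subspace of dimension `< n`,
then the barycentric coordinates `b 0, …, b n` are linearly independent over `ℚ`. -/
theorem stmt_6 (m n : ℕ) (hm : 1 ≤ m)
    (v : Fin (n + 1) → (Fin m → ℝ))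
    (hvQ : ∀ i j, ∃ q : ℚ, v i j = (q : ℝ))
    (hvind : AffineIndependent ℝ v)
    (b : Fin (n + 1) → ℝ) (hb : ∀ i, 0 < b i) (hbsum : ∑ i, b i = 1)
    (v₀ : Fin m → ℝ) (hv₀ : v₀ = ∑ i, b i • v i)
    (hmin : ∀ W : AffineSubspace ℝ (Fin m → ℝ), IsRationalAffine m W → v₀ ∈ W →
      n ≤ Module.finrank ℝ W.direction) :
    ∀ q : Fin (n + 1) → ℚ, ∑ i, (q i : ℝ) * b i = 0 → ∀ i, q i = 0 :=
  stmt_6_general m n v hvQ b hbsum v₀ hv₀ hmin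
end

section
/- Let V be a real vector space, let m be a positive integer, let g_1, …, g_m ∈ V, and let v_1, …, v_m be positive real numbers; set x := ∑_{i=1}^m v_i · g_i. Then there exist a positive integer k, positive real numbers a_1, …, a_k that are linearly independent over ℚ (the only rationals q_1, …, q_k with ∑ q_j a_j = 0 are all zero), and elements h_1, …, h_k ∈ V, each of the form h_j = ∑_{i=1}^m c_{j,i} · g_i with nonnegative integers c_{j,i}, such that x = ∑_{j=1}^k a_j · h_j. -/
/-!
Work with the `ℚ≥0`-cone spanned by a finite family of positive reals, and add the `v i` one at a
time, keeping a `ℚ`-linearly independent family `b` of positive reals whose cone contains the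
`v i` seen so far. A new `y` outside the `ℚ`-span of `b` is appended to `b`. Otherwise
`y = P - Q` with `P = ∑ p j • b j` and `Q = ∑ n j • b j` from the positive and negative parts of
its coordinates, and `Q < P` because `y > 0`. Choosing rationals `b j / P ≤ σ j < b j / Q` on the
support of `p`, the family `b j - σ j * Q` is still positive, its cone contains every
`b j = b' j + σ j • Q` and `y = ∑ p j • b' j + (∑ p j * σ j - 1) • Q`, and it is still independent
because its span contains that of `b`. Clearing denominators at the end gives the integers.
-/

open Finset Set Submodule

theorem LinearIndependent.of_range_subset_span {K V ι : Type*} [DivisionRing K] [AddCommGroup V]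
    [Module K V] [Fintype ι] {b b' : ι → V} (hb : LinearIndependent K b)
    (h : range b ⊆ span K (range b')) : LinearIndependent K b' := by
  rw [linearIndependent_iff_card_le_finrank_span] at hb ⊢
  have := Module.Finite.span_of_finite K (finite_range b')
  exact hb.trans (Submodule.finrank_mono (span_le.mpr h))

theorem NNRat.exists_pos_nat_mul_eq_natCast {ι : Type*} [Fintype ι] (q : ι → ℚ≥0) :
    ∃ D : ℕ, 0 < D ∧ ∀ i, ∃ c : ℕ, q i * D = c := by
  refine ⟨∏ i, (q i).den, Finset.prod_pos fun i _ ↦ (q i).den_pos, fun i ↦ ?_⟩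
  obtain ⟨e, he⟩ := Finset.dvd_prod_of_mem (fun i ↦ (q i).den) (Finset.mem_univ i)
  refine ⟨(q i).num * e, ?_⟩
  rw [he]
  push_cast
  rw [← mul_assoc, NNRat.mul_den_eq_num]

theorem sum_smul_mem_span_range {R M ι : Type*} [Semiring R] [AddCommMonoid M] [Module R M]
    [Fintype ι] (c : ι → R) (b : ι → M) : ∑ j, c j • b j ∈ span R (range b) :=
  (mem_span_range_iff_exists_fun R).mpr ⟨c, rfl⟩

theorem exists_pos_span_nnrat_ge_and_sub_mem {ι : Type*} [Fintype ι] (b : ι → ℝ) (hb : ∀ j, 0 < b j)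
    (p n : ι → ℚ≥0) (hpn : ∀ j, p j = 0 ∨ n j = 0) (hQ : 0 < ∑ j, n j • b j)
    (hQP : ∑ j, n j • b j < ∑ j, p j • b j) :
    ∃ b' : ι → ℝ, (∀ j, 0 < b' j) ∧ span ℚ≥0 (range b) ≤ span ℚ≥0 (range b') ∧
      ∑ j, p j • b j - ∑ j, n j • b j ∈ span ℚ≥0 (range b') := by
  set P := ∑ j, p j • b j
  set Q := ∑ j, n j • b j
  have hσ : ∀ j, ∃ σ : ℚ≥0, σ * Q < b j ∧ p j * b j ≤ p j * σ * P ∧ n j * σ = 0 := by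
    intro j
    rcases hpn j with hp | hn
    · exact ⟨0, by simpa using hb j, by simp [hp], by simp⟩
    obtain ⟨σ, hPσ, hσQ⟩ := exists_rat_btwn (div_lt_div_of_pos_left (hb j) hQ hQP)
    lift σ to ℚ≥0 using (by exact_mod_cast (div_pos (hb j) (hQ.trans hQP)).le.trans hPσ.le)
    refine ⟨σ, ?_, ?_, by simp [hn]⟩
    · push_cast at hσQ
      exact (lt_div_iff₀ hQ).mp hσQ
    · push_cast at hPσ
      rw [mul_assoc]
      exact mul_le_mul_of_nonneg_left ((div_le_iff₀ (hQ.trans hQP)).mp hPσ.le) (by positivity)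
  choose σ hσQ hσP hσn using hσ
  set b' := fun j ↦ b j - σ j * Q
  have hQ' : Q = ∑ j, n j • b' j := by
    have hterm : ∀ j, n j • (σ j * Q) = 0 := fun j ↦ by
      rw [NNRat.smul_def, ← mul_assoc, ← NNRat.cast_mul, hσn, NNRat.cast_zero, zero_mul]
    simp only [b', smul_sub, hterm, sub_zero, Q]
  have hb_mem : ∀ j, b j ∈ span ℚ≥0 (range b') := by
    intro j
    have : b j = b' j + σ j • ∑ j, n j • b' j := by
      rw [← hQ', NNRat.smul_def]; simp [b']
    rw [this]
    exact add_mem (subset_span (mem_range_self j)) (smul_mem _ _ (sum_smul_mem_span_range _ _))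
  refine ⟨b', fun j ↦ sub_pos.mpr (hσQ j), span_le.mpr (range_subset_iff.mpr hb_mem), ?_⟩
  have hP : 0 < P := hQ.trans hQP
  have hS : (1 : ℝ) ≤ ∑ j, (p j * σ j : ℚ≥0) := by
    refine le_of_mul_le_mul_right ?_ hP
    calc 1 * P = ∑ j, p j * b j := by simp [P, NNRat.smul_def]
      _ ≤ ∑ j, p j * σ j * P := Finset.sum_le_sum fun j _ ↦ hσP j
      _ = _ := by push_cast; exact (Finset.sum_mul ..).symm
  obtain ⟨c, hc⟩ := exists_add_of_le (α := ℚ≥0) (by exact_mod_cast hS)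
  have hPQ : P - Q = ∑ j, p j • b' j + c • ∑ j, n j • b' j := by
    have hc' : ∑ j, (p j : ℝ) * σ j = 1 + c := by exact_mod_cast hc
    rw [← hQ']
    simp only [b', P, NNRat.smul_def, mul_sub, Finset.sum_sub_distrib, ← mul_assoc,
      ← Finset.sum_mul, hc']
    ring
  rw [hPQ]
  exact add_mem (sum_smul_mem_span_range _ _) (smul_mem _ _ (sum_smul_mem_span_range _ _))

theorem exists_pos_span_nnrat_ge_and_mem {ι : Type*} [Fintype ι] (b : ι → ℝ) (hb : ∀ j, 0 < b j)
    {y : ℝ} (hy : 0 < y) (hyb : y ∈ span ℚ (range b)) :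
    ∃ b' : ι → ℝ, (∀ j, 0 < b' j) ∧ span ℚ≥0 (range b) ≤ span ℚ≥0 (range b') ∧
      y ∈ span ℚ≥0 (range b') := by
  obtain ⟨μ, rfl⟩ := (mem_span_range_iff_exists_fun ℚ).mp hyb
  have hsplit : ∀ j, ∃ p n : ℚ≥0, (p : ℚ) - n = μ j ∧ (p = 0 ∨ n = 0) := fun j ↦ by
    rcases le_total 0 (μ j) with h | h
    · exact ⟨⟨μ j, h⟩, 0, by simp, Or.inr rfl⟩
    · exact ⟨0, ⟨-μ j, neg_nonneg.mpr h⟩, by simp, Or.inl rfl⟩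
  choose p n hpn hdisj using hsplit
  have hy' : ∑ j, μ j • b j = ∑ j, p j • b j - ∑ j, n j • b j := by
    simp only [← hpn, Rat.smul_def, NNRat.smul_def, ← Finset.sum_sub_distrib, ← sub_mul]
    push_cast
    rfl
  rw [hy'] at hy ⊢
  have hQ0 : 0 ≤ ∑ j, n j • b j := Finset.sum_nonneg fun j _ ↦ by
    rw [NNRat.smul_def]; exact mul_nonneg (by positivity) (hb j).le
  rcases hQ0.lt_or_eq with hQ | hQ
  · exact exists_pos_span_nnrat_ge_and_sub_mem b hb p n hdisj hQ (sub_pos.mp hy)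
  · refine ⟨b, hb, le_rfl, ?_⟩
    rw [← hQ, sub_zero]
    exact sum_smul_mem_span_range _ _

theorem exists_linearIndependent_pos_span_nnrat_ge_and_mem {k : ℕ} (b : Fin k → ℝ)
    (hb : ∀ j, 0 < b j) (hind : LinearIndependent ℚ b) {y : ℝ} (hy : 0 < y) :
    ∃ (k' : ℕ) (b' : Fin k' → ℝ), (∀ j, 0 < b' j) ∧ LinearIndependent ℚ b' ∧
      span ℚ≥0 (range b) ≤ span ℚ≥0 (range b') ∧ y ∈ span ℚ≥0 (range b') := by
  by_cases hyb : y ∈ span ℚ (range b)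
  · obtain ⟨b', hb', hle, hy'⟩ := exists_pos_span_nnrat_ge_and_mem b hb hy hyb
    refine ⟨k, b', hb', hind.of_range_subset_span fun z hz ↦ ?_, hle, hy'⟩
    exact span_le_restrictScalars ℚ≥0 ℚ _ (hle (subset_span hz))
  · refine ⟨k + 1, Fin.cons y b, Fin.cases hy hb, linearIndependent_finCons.mpr ⟨hind, hyb⟩,
      span_mono ?_, subset_span ?_⟩ <;> rw [Fin.range_cons]
    exacts [subset_insert _ _, mem_insert _ _]

theorem exists_linearIndependent_pos_span_nnrat_superset (s : Finset ℝ) (hs : ∀ y ∈ s, 0 < y) :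
    ∃ (k : ℕ) (b : Fin k → ℝ), (∀ j, 0 < b j) ∧ LinearIndependent ℚ b ∧
      (s : Set ℝ) ⊆ span ℚ≥0 (range b) := by
  induction s using Finset.induction_on with
  | empty => exact ⟨0, Fin.elim0, fun j ↦ j.elim0, linearIndependent_empty_type, by simp⟩
  | insert y s _ ih =>
    obtain ⟨k, b, hb, hind, hsb⟩ := ih fun z hz ↦ hs z (mem_insert_of_mem hz)
    obtain ⟨k', b', hb', hind', hle, hy⟩ :=
      exists_linearIndependent_pos_span_nnrat_ge_and_mem b hb hind (hs y (mem_insert_self y s))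
    rw [Finset.coe_insert]
    exact ⟨k', b', hb', hind', insert_subset hy (hsb.trans hle)⟩

theorem exists_linearIndependent_pos_nat_comb {ι : Type*} [Fintype ι] (v : ι → ℝ)
    (hv : ∀ i, 0 < v i) :
    ∃ (k : ℕ) (a : Fin k → ℝ) (c : Fin k → ι → ℕ), (∀ j, 0 < a j) ∧ LinearIndependent ℚ a ∧
      ∀ i, v i = ∑ j, (c j i : ℝ) * a j := by
  classical
  obtain ⟨k, b, hb, hind, hvb⟩ :=
    exists_linearIndependent_pos_span_nnrat_superset (univ.image v) (by simpa using hv)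
  choose μ hμ using fun i ↦ (mem_span_range_iff_exists_fun ℚ≥0).mp (hvb (by simp : v i ∈ _))
  obtain ⟨D, hD, hc⟩ := NNRat.exists_pos_nat_mul_eq_natCast fun p : Fin k × ι ↦ μ p.2 p.1
  choose c hc using hc
  refine ⟨k, fun j ↦ b j / D, fun j i ↦ c (j, i), fun j ↦ div_pos (hb j) (by positivity), ?_, ?_⟩
  · convert hind.units_smul fun _ ↦ Units.mk0 (D : ℚ)⁻¹ (by positivity) using 1
    ext j
    simp [Rat.smul_def, div_eq_inv_mul]
  · intro i
    rw [← hμ i]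
    refine Finset.sum_congr rfl fun j _ ↦ ?_
    have hcij : (c (j, i) : ℝ) = μ i j * D := by exact_mod_cast (hc (j, i)).symm
    rw [hcij, NNRat.smul_def]
    field_simp

/-- Any positive real combination `x = ∑ v i • g i` of elements of a real vector space can be
rewritten as `x = ∑ a j • h j`, where the positive reals `a j` are linearly independent over
`ℚ` and each `h j` is a nonnegative-integer combination of the `g i`. -/
theorem stmt_7 (V : Type*) [AddCommGroup V] [Module ℝ V]
    (m : ℕ) (hm : 0 < m) (g : Fin m → V) (v : Fin m → ℝ) (hv : ∀ i, 0 < v i)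
    (x : V) (hx : x = ∑ i, v i • g i) :
    ∃ (k : ℕ) (a : Fin k → ℝ) (c : Fin k → Fin m → ℕ),
      0 < k ∧
      (∀ j, 0 < a j) ∧
      (∀ q : Fin k → ℚ, ∑ j, (q j : ℝ) * a j = 0 → ∀ j, q j = 0) ∧
      x = ∑ j, a j • (∑ i, (c j i : ℝ) • g i) := by
  obtain ⟨k, a, c, ha, hind, hvc⟩ := exists_linearIndependent_pos_nat_comb v hv
  have hk : 0 < k := by
    refine Nat.pos_of_ne_zero fun hk ↦ (hv ⟨0, hm⟩).ne' ?_
    subst hk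
    simpa using hvc ⟨0, hm⟩
  refine ⟨k, a, c, hk, ha, fun q hq ↦ Fintype.linearIndependent_iff.mp hind q ?_, ?_⟩
  · simpa only [Rat.smul_def] using hq
  · simp only [hx, hvc, Finset.sum_smul, Finset.smul_sum, smul_smul, mul_comm (a _)]
    exact Finset.sum_comm
end
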